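/- arXiv:nlin/0406017 — 3 statements merged into one kernel-verified Lean document; each statement's English description precedes it below -/
import Mathlib

section
/- The Steklov Hamiltonian H_S and the Lyapunov Hamiltonian H_L Poisson commute with respect to the e(3) Lie–Poisson bracket: {H_S, H_L}₁ = 0. -/
open scoped BigOperators

abbrev V3 := Fin 3 → ℝ
abbrev Ph := V3 × V3

noncomputable def eps (i j k : Fin 3) : ℝ :=
  (((j : ℤ) - (i : ℤ)) * ((k : ℤ) - (j : ℤ)) * ((k : ℤ) - (i : ℤ)) : ℤ) / 2

def dot (u v : V3) : ℝ := ∑ i, u i * v i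

def cross (u v : V3) : V3 :=
  ![u 1 * v 2 - u 2 * v 1, u 2 * v 0 - u 0 * v 2, u 0 * v 1 - u 1 * v 0]

/-- derivative in the direction of the i-th coordinate of the first factor -/
noncomputable def Dp (i : Fin 3) (F : Ph → ℝ) (z : Ph) : ℝ :=
  fderiv ℝ F z (Pi.single i 1, 0)

/-- derivative in the direction of the i-th coordinate of the second factor -/
noncomputable def DM (i : Fin 3) (F : Ph → ℝ) (z : Ph) : ℝ :=
  fderiv ℝ F z (0, Pi.single i 1)

/-- e(3) Lie–Poisson bracket on functions of z = (p, M):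
{M_i,M_j} = ε_{ijk} M_k, {M_i,p_j} = ε_{ijk} p_k, {p_i,p_j} = 0. -/
noncomputable def pb1 (F G : Ph → ℝ) (z : Ph) : ℝ :=
  ∑ i, ∑ j, ∑ k, eps i j k *
    ( z.2 k * DM i F z * DM j G z
    + z.1 k * (DM i F z * Dp j G z + Dp i F z * DM j G z) )
/-- Steklov Hamiltonian: 4H_S = ⟨M,AM⟩ + 2⟨M,A^∨p⟩ + ⟨Ap,C²p⟩,
with A = diag(a₁,a₂,a₃), A^∨ = diag(a₂a₃,a₃a₁,a₁a₂), C = diag(a₂−a₃,a₃−a₁,a₁−a₂). -/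
noncomputable def HS (a : Fin 3 → ℝ) (z : Ph) : ℝ :=
  ( dot z.2 (fun i => a i * z.2 i)
  + 2 * dot z.2 (fun i => (a (i+1) * a (i+2)) * z.1 i)
  + dot (fun i => a i * z.1 i) (fun i => (a (i+1) - a (i+2))^2 * z.1 i) ) / 4

/-- Lyapunov Hamiltonian: 4H_L = ⟨M,M⟩ − 2⟨M,Ap⟩ + ⟨p,C²p⟩. -/
noncomputable def HL (a : Fin 3 → ℝ) (z : Ph) : ℝ :=
  ( dot z.2 z.2 - 2 * dot z.2 (fun i => a i * z.1 i)
  + dot z.1 (fun i => (a (i+1) - a (i+2))^2 * z.1 i) ) / 4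

/-! Both Hamiltonians are diagonal quadratic forms `∑ αᵢ Mᵢ² + βᵢ Mᵢ pᵢ + γᵢ pᵢ²`, so their
gradients are explicit and linear, and the bracket
`⟨M, ∇_M F × ∇_M G⟩ + ⟨p, ∇_M F × ∇_p G + ∇_p F × ∇_M G⟩` of `H_S` and `H_L` is a cubic polynomial
in `(p, M)` whose coefficients vanish identically in `a₁, a₂, a₃`. -/

section DiagQuad

variable {ι : Type*} [Fintype ι]

def diagQuad (α β γ : ι → ℝ) (z : (ι → ℝ) × (ι → ℝ)) : ℝ :=
  ∑ i, (α i * z.2 i ^ 2 + β i * z.2 i * z.1 i + γ i * z.1 i ^ 2)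

theorem fderiv_diagQuad_apply (α β γ : ι → ℝ) (z v : (ι → ℝ) × (ι → ℝ)) :
    fderiv ℝ (diagQuad α β γ) z v =
      ∑ i, ((2 * α i * z.2 i + β i * z.1 i) * v.2 i + (β i * z.2 i + 2 * γ i * z.1 i) * v.1 i) := by
  unfold diagQuad
  rw [fderiv_fun_sum fun i _ => by fun_prop]
  simp (disch := fun_prop) only [fderiv_fun_add, fderiv_fun_mul, fderiv_fun_pow, fderiv_apply,
    fderiv_fst, fderiv_snd, fderiv_fun_const, Nat.add_one_sub_one, pow_one, nsmul_eq_mul,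
    Nat.cast_ofNat, Pi.zero_apply, ContinuousLinearMap.comp_zero, smul_zero, add_zero, sum_apply,
    add_apply, smul_apply, ContinuousLinearMap.comp_apply, ContinuousLinearMap.coe_snd',
    ContinuousLinearMap.coe_fst', ContinuousLinearMap.proj_apply, smul_eq_mul]
  exact Finset.sum_congr rfl fun i _ => by ring

end DiagQuad

theorem DM_diagQuad (α β γ : Fin 3 → ℝ) (z : Ph) (i : Fin 3) :
    DM i (diagQuad α β γ) z = 2 * α i * z.2 i + β i * z.1 i := by
  simp [DM, fderiv_diagQuad_apply, Pi.single_apply]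

theorem Dp_diagQuad (α β γ : Fin 3 → ℝ) (z : Ph) (i : Fin 3) :
    Dp i (diagQuad α β γ) z = β i * z.2 i + 2 * γ i * z.1 i := by
  simp [Dp, fderiv_diagQuad_apply, Pi.single_apply]

theorem pb1_eq_dot_cross (F G : Ph → ℝ) (z : Ph) :
    pb1 F G z = dot z.2 (cross (fun i => DM i F z) (fun i => DM i G z))
      + dot z.1 (cross (fun i => DM i F z) (fun i => Dp i G z)
        + cross (fun i => Dp i F z) (fun i => DM i G z)) := by
  simp only [pb1, dot, cross, Fin.sum_univ_three, Pi.add_apply, Matrix.cons_val_zero,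
    Matrix.cons_val_one, Matrix.cons_val]
  norm_num [eps]
  ring

theorem HS_eq_diagQuad (a : Fin 3 → ℝ) :
    HS a = diagQuad (fun i => a i / 4) (fun i => a (i + 1) * a (i + 2) / 2)
      (fun i => a i * (a (i + 1) - a (i + 2)) ^ 2 / 4) := by
  ext z
  simp only [HS, diagQuad, dot, ← Finset.sum_add_distrib, Finset.mul_sum, Finset.sum_div]
  exact Finset.sum_congr rfl fun i _ => by ring

theorem HL_eq_diagQuad (a : Fin 3 → ℝ) :
    HL a = diagQuad (fun _ => 1 / 4) (fun i => -a i / 2)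
      (fun i => (a (i + 1) - a (i + 2)) ^ 2 / 4) := by
  ext z
  simp only [HL, diagQuad, dot, ← Finset.sum_add_distrib, ← Finset.sum_sub_distrib,
    Finset.mul_sum, Finset.sum_div]
  exact Finset.sum_congr rfl fun i _ => by ring

/-- The Steklov and Lyapunov Hamiltonians are in involution on e(3). -/
theorem steklov_lyapunov_involution (a : Fin 3 → ℝ) (z : Ph) :
    pb1 (HS a) (HL a) z = 0 := by
  rw [pb1_eq_dot_cross, HS_eq_diagQuad, HL_eq_diagQuad]
  simp only [DM_diagQuad, Dp_diagQuad, dot, cross, Fin.sum_univ_three, Fin.isValue,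
    Fin.reduceAdd, Matrix.cons_val_zero, Matrix.cons_val_one, Matrix.cons_val, Pi.add_apply]
  ring
end

section
/- With ℓ(λ) = W(½(M − Bp) + λp), where W = diag(√(λ−a₁), √(λ−a₂), √(λ−a₃)) and B = diag(a₂+a₃, a₃+a₁, a₁+a₂), the squared length |ℓ(λ)|² is the cubic polynomial 𝒜λ³ + (ℬ − 𝒜(a₁+a₂+a₃))λ² + H₁λ + H₂ in λ, where 𝒜 = |p|², ℬ = ⟨p,M⟩, H₁ = H_L − (ℬ/2)tr A + 𝒜 tr A^∨ and H₂ = −H_S + (ℬ/2)tr A^∨ − 𝒜 det A. -/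
open scoped BigOperators

/-! The terms of `|ℓ(λ)|² = Σᵢ (λ - aᵢ)(mᵢ + λpᵢ)²` are sorted by powers of `λ`; this works for any
weights `aᵢ`, offsets `mᵢ` and directions `pᵢ`. With `m = ½(M - Bp)` the `λ²`-coefficient collapses because
`aᵢ + Bᵢᵢ = tr A`, and the remaining two coefficients are `H_L` and `-H_S` up to multiples of `ℬ` and `𝒜`. -/

theorem Finset.sum_sub_mul_add_mul_sq {ι R : Type*} [Fintype ι] [CommRing R] (a m p : ι → R) (x : R) :
    ∑ i, (x - a i) * (m i + x * p i) ^ 2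
      = (∑ i, p i ^ 2) * x ^ 3 + (∑ i, (2 * m i * p i - a i * p i ^ 2)) * x ^ 2
        + (∑ i, (m i ^ 2 - 2 * a i * m i * p i)) * x - ∑ i, a i * m i ^ 2 := by
  simp only [Finset.sum_mul, ← Finset.sum_add_distrib, ← Finset.sum_sub_distrib]
  exact Finset.sum_congr rfl fun i _ => by ring

/-- `½(M - Bp)`, the offset of `ℓ(λ) = W(½(M - Bp) + λp)`. -/
noncomputable def kotterOffset (a : Fin 3 → ℝ) (z : Ph) : V3 :=
  fun i => (1/2) * (z.2 i - (a (i+1) + a (i+2)) * z.1 i)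

section KotterCoefficients

variable (a : Fin 3 → ℝ) (z : Ph)

theorem dot_self_eq_sum_sq : dot z.1 z.1 = ∑ i, z.1 i ^ 2 := by
  simp only [dot, sq]

theorem sum_kotterOffset_quadratic_coeff :
    ∑ i, (2 * kotterOffset a z i * z.1 i - a i * z.1 i ^ 2)
      = dot z.1 z.2 - dot z.1 z.1 * (a 0 + a 1 + a 2) := by
  simp only [kotterOffset, dot, Fin.sum_univ_three, Fin.reduceAdd, Fin.isValue]
  ring

theorem sum_kotterOffset_linear_coeff :
    ∑ i, (kotterOffset a z i ^ 2 - 2 * a i * kotterOffset a z i * z.1 i)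
      = HL a z - (dot z.1 z.2 / 2) * (a 0 + a 1 + a 2)
        + dot z.1 z.1 * (a 1 * a 2 + a 2 * a 0 + a 0 * a 1) := by
  simp only [kotterOffset, HL, dot, Fin.sum_univ_three, Fin.reduceAdd, Fin.isValue]
  ring

theorem sum_mul_kotterOffset_sq :
    ∑ i, a i * kotterOffset a z i ^ 2
      = HS a z - (dot z.1 z.2 / 2) * (a 1 * a 2 + a 2 * a 0 + a 0 * a 1)
        + dot z.1 z.1 * (a 0 * a 1 * a 2) := by
  simp only [kotterOffset, HS, dot, Fin.sum_univ_three, Fin.reduceAdd, Fin.isValue]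
  ring

end KotterCoefficients

/-- |ℓ(λ)|² = Σᵢ (λ−aᵢ)(½(Mᵢ−Bᵢᵢpᵢ)+λpᵢ)² is the cubic polynomial
𝒜λ³ + (ℬ − 𝒜 tr A)λ² + H₁λ + H₂, where 𝒜 = |p|², ℬ = ⟨p,M⟩,
H₁ = H_L − (ℬ/2)tr A + 𝒜 tr A^∨, H₂ = −H_S + (ℬ/2)tr A^∨ − 𝒜 det A,
and B = diag(a₂+a₃, a₃+a₁, a₁+a₂). -/
theorem kotter_vector_norm (a : Fin 3 → ℝ) (z : Ph) (lam : ℝ) :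
    (∑ i, (lam - a i) * ((1/2) * (z.2 i - (a (i+1) + a (i+2)) * z.1 i) + lam * z.1 i)^2)
    = dot z.1 z.1 * lam^3
      + (dot z.1 z.2 - dot z.1 z.1 * (a 0 + a 1 + a 2)) * lam^2
      + (HL a z - (dot z.1 z.2 / 2) * (a 0 + a 1 + a 2)
          + dot z.1 z.1 * (a 1 * a 2 + a 2 * a 0 + a 0 * a 1)) * lam
      + (- HS a z + (dot z.1 z.2 / 2) * (a 1 * a 2 + a 2 * a 0 + a 0 * a 1)
          - dot z.1 z.1 * (a 0 * a 1 * a 2)) := by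
  calc _ = ∑ i, (lam - a i) * (kotterOffset a z i + lam * z.1 i) ^ 2 := rfl
    _ = _ := by
      rw [Finset.sum_sub_mul_add_mul_sq, ← dot_self_eq_sum_sq, sum_kotterOffset_quadratic_coeff,
        sum_kotterOffset_linear_coeff, sum_mul_kotterOffset_sq]
      ring
end

section
/- For canonical variables x_i, π_i with {π_i, x_j} = δ_{ij}, {x_i,x_j} = {π_i,π_j} = 0, and distinct constants a₁,a₂,a₃, the functions e(λ) = Σᵢ xᵢ²/(λ−aᵢ) and h(λ) = −½ Σᵢ xᵢπᵢ/(λ−aᵢ) satisfy the r-matrix relation {h(λ), e(μ)} = (e(λ) − e(μ))/(λ − μ) for all λ ≠ μ not equal to any aᵢ. -/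
open scoped BigOperators

/-- Canonical Poisson bracket on z = (x, π): {π_i,x_j} = δ_{ij}. -/
noncomputable def pbC (F G : Ph → ℝ) (z : Ph) : ℝ :=
  ∑ i, (DM i F z * Dp i G z - Dp i F z * DM i G z)

/-!
Both functions are quadratic, so the bracket is computed coordinatewise:
{h(λ), e(μ)} = -Σᵢ xᵢ² / ((λ - aᵢ)(μ - aᵢ)), and the partial fraction identity
1 / ((λ - a)(μ - a)) = (1/(μ - a) - 1/(λ - a)) / (λ - μ) turns this into the right-hand side.
-/

noncomputable def coordX (i : Fin 3) : Ph →L[ℝ] ℝ :=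
  (ContinuousLinearMap.proj i).comp (ContinuousLinearMap.fst ℝ V3 V3)

noncomputable def coordPi (i : Fin 3) : Ph →L[ℝ] ℝ :=
  (ContinuousLinearMap.proj i).comp (ContinuousLinearMap.snd ℝ V3 V3)

section Derivatives

variable (c : Fin 3 → ℝ) (z : Ph) (j : Fin 3)

theorem hasFDerivAt_sum_sq_div :
    HasFDerivAt (fun z : Ph => ∑ i, z.1 i ^ 2 / c i)
      (∑ i, (2 * z.1 i / c i) • coordX i) z := by
  refine HasFDerivAt.fun_sum fun i _ => ?_
  simp only [div_eq_mul_inv]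
  refine ((((coordX i).hasFDerivAt (x := z)).pow 2).mul_const (c i)⁻¹).congr_fderiv ?_
  rw [smul_smul]
  congr 1
  simp [coordX, mul_comm]

theorem hasFDerivAt_neg_half_sum_mul_div :
    HasFDerivAt (fun z : Ph => -(1/2) * ∑ i, z.1 i * z.2 i / c i)
      ((-(1/2) : ℝ) • ∑ i, (c i)⁻¹ • (z.1 i • coordPi i + z.2 i • coordX i)) z := by
  refine (HasFDerivAt.fun_sum fun i _ => ?_).const_mul _
  simp only [div_eq_mul_inv]
  exact (((coordX i).hasFDerivAt (x := z)).mul (coordPi i).hasFDerivAt).mul_const (c i)⁻¹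

theorem Dp_sum_sq_div : Dp j (fun z : Ph => ∑ i, z.1 i ^ 2 / c i) z = 2 * z.1 j / c j := by
  rw [Dp, (hasFDerivAt_sum_sq_div c z).fderiv]
  simp [coordX, Pi.single_apply]

theorem DM_sum_sq_div : DM j (fun z : Ph => ∑ i, z.1 i ^ 2 / c i) z = 0 := by
  rw [DM, (hasFDerivAt_sum_sq_div c z).fderiv]
  simp [coordX]

theorem Dp_neg_half_sum_mul_div :
    Dp j (fun z : Ph => -(1/2) * ∑ i, z.1 i * z.2 i / c i) z = -(1/2) * (z.2 j / c j) := by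
  rw [Dp, (hasFDerivAt_neg_half_sum_mul_div c z).fderiv]
  simp [coordX, coordPi, Pi.single_apply, div_eq_mul_inv, mul_comm]

theorem DM_neg_half_sum_mul_div :
    DM j (fun z : Ph => -(1/2) * ∑ i, z.1 i * z.2 i / c i) z = -(1/2) * (z.1 j / c j) := by
  rw [DM, (hasFDerivAt_neg_half_sum_mul_div c z).fderiv]
  simp [coordX, coordPi, Pi.single_apply, div_eq_mul_inv, mul_comm]

end Derivatives

theorem pbC_neg_half_sum_mul_div_sum_sq_div (c d : Fin 3 → ℝ) (z : Ph) :
    pbC (fun z => -(1/2) * ∑ i, z.1 i * z.2 i / c i) (fun z => ∑ i, z.1 i ^ 2 / d i) z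
      = -∑ i, z.1 i ^ 2 / (c i * d i) := by
  simp only [pbC, Dp_sum_sq_div, DM_sum_sq_div, Dp_neg_half_sum_mul_div, DM_neg_half_sum_mul_div,
    mul_zero, sub_zero, ← Finset.sum_neg_distrib]
  congr 1; ext i; ring

theorem rmatrix_relation_general (a : Fin 3 → ℝ)
    (lam mu : ℝ) (hlm : lam ≠ mu) (hl : ∀ i, lam ≠ a i) (hm : ∀ i, mu ≠ a i)
    (z : Ph) :
    pbC (fun z => -(1/2) * ∑ i, z.1 i * z.2 i / (lam - a i))
        (fun z => ∑ i, z.1 i ^ 2 / (mu - a i)) z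
    = ((∑ i, z.1 i ^ 2 / (lam - a i)) - (∑ i, z.1 i ^ 2 / (mu - a i))) / (lam - mu) := by
  rw [pbC_neg_half_sum_mul_div_sum_sq_div, ← Finset.sum_sub_distrib, Finset.sum_div,
    ← Finset.sum_neg_distrib]
  refine Finset.sum_congr rfl fun i _ => ?_
  have hli : lam - a i ≠ 0 := sub_ne_zero.mpr (hl i)
  have hmi : mu - a i ≠ 0 := sub_ne_zero.mpr (hm i)
  have hlm' : lam - mu ≠ 0 := sub_ne_zero.mpr hlm
  field_simp
  ring

/-- The r-matrix relation {h(λ), e(μ)} = (e(λ) − e(μ))/(λ − μ) for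
e(λ) = Σᵢ xᵢ²/(λ−aᵢ), h(λ) = −½Σᵢ xᵢπᵢ/(λ−aᵢ). -/
theorem rmatrix_relation (a : Fin 3 → ℝ) (hdist : ∀ i j, i ≠ j → a i ≠ a j)
    (lam mu : ℝ) (hlm : lam ≠ mu) (hl : ∀ i, lam ≠ a i) (hm : ∀ i, mu ≠ a i)
    (z : Ph) :
    pbC (fun z => -(1/2) * ∑ i, z.1 i * z.2 i / (lam - a i))
        (fun z => ∑ i, z.1 i ^ 2 / (mu - a i)) z
    = ((∑ i, z.1 i ^ 2 / (lam - a i)) - (∑ i, z.1 i ^ 2 / (mu - a i))) / (lam - mu) :=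
  rmatrix_relation_general a lam mu hlm hl hm z
end
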